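/- Let σ : [0,T] → GL_d(ℝ) and η : [0,T] → ℝ^d be continuous, b < 1 with b ≠ 0, and K ⊂ ℝ^d closed convex with nonempty interior. If for each t we define λ*(t) as a minimizer of λ ↦ 2(1−b)δ_K(λ) + ‖σ(t)^{-1}(η(t)+λ)‖² over ℝ^d, then the map t ↦ λ*(t) is uniformly bounded on [0,T]. -/
import Mathlib


open scoped BigOperators

noncomputable def dotp {d : ℕ} (x y : Fin d → ℝ) : ℝ := ∑ i, x i * y i

noncomputable def suppFn {d : ℕ} (K : Set (Fin d → ℝ)) (l : Fin d → ℝ) : EReal :=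
  ⨆ y ∈ K, ((-(dotp y l) : ℝ) : EReal)

/-- Quadratic root bound: if `x ≥ 0`, `A ≥ 0`, `D ≥ 0` and `x^2 ≤ A*x + D`,
then `x ≤ A + √D`. -/
lemma quad_root_bound {x A D : ℝ} (hx : 0 ≤ x) (hA : 0 ≤ A) (hD : 0 ≤ D)
    (h : x ^ 2 ≤ A * x + D) : x ≤ A + Real.sqrt D := by
  have hs : 0 ≤ Real.sqrt D := Real.sqrt_nonneg D
  have hsq : Real.sqrt D ^ 2 = D := Real.sq_sqrt hD
  nlinarith [mul_nonneg hs hx, mul_nonneg hA hx, sq_nonneg (x - Real.sqrt D)]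

/-- with `σ : [0,T] → GL_d(ℝ)`, `η : [0,T] → ℝ^d` continuous, `b < 1`,
`b ≠ 0`, and `K` closed convex with nonempty interior, any selection `t ↦ λ*(t)` of
minimizers of `λ ↦ 2(1−b)δ_K(λ) + ‖σ(t)⁻¹(η(t)+λ)‖²` is uniformly bounded on `[0,T]`. -/
theorem dual_minimizer_uniformly_bounded {d : ℕ} (T : ℝ) (hT : 0 < T)
    (σm : ℝ → Matrix (Fin d) (Fin d) ℝ) (η : ℝ → Fin d → ℝ)
    (hσc : ContinuousOn σm (Set.Icc 0 T)) (hηc : ContinuousOn η (Set.Icc 0 T))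
    (hσinv : ∀ t ∈ Set.Icc (0:ℝ) T, IsUnit (σm t).det)
    (bb : ℝ) (hb1 : bb < 1) (hb0 : bb ≠ 0)
    (K : Set (Fin d → ℝ)) (hKcl : IsClosed K) (hKcv : Convex ℝ K)
    (hKint : (interior K).Nonempty)
    (ls : ℝ → Fin d → ℝ)
    (hmin : ∀ t ∈ Set.Icc (0:ℝ) T, ∀ l : Fin d → ℝ,
      ((2 * (1 - bb) : ℝ) : EReal) * suppFn K (ls t) +
          ((∑ i, ((σm t)⁻¹.mulVec (η t + ls t)) i ^ 2 : ℝ) : EReal) ≤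
        ((2 * (1 - bb) : ℝ) : EReal) * suppFn K l +
          ((∑ i, ((σm t)⁻¹.mulVec (η t + l)) i ^ 2 : ℝ) : EReal)) :
    ∃ C : ℝ, ∀ t ∈ Set.Icc (0:ℝ) T, ‖ls t‖ ≤ C := by
  set c : ℝ := 2 * (1 - bb) with hc_def
  have hc : 0 < c := by simp only [hc_def]; linarith
  -- a point of K
  obtain ⟨y0, hy0int⟩ := hKint
  have hy0K : y0 ∈ K := interior_subset hy0int
  set B : ℝ := ∑ i, |y0 i| with hB_def
  have hB : 0 ≤ B := Finset.sum_nonneg fun i _ => abs_nonneg _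
  -- compactness of the interval
  have hcpt : IsCompact (Set.Icc (0:ℝ) T) := isCompact_Icc
  have h0mem : (0:ℝ) ∈ Set.Icc (0:ℝ) T := by constructor <;> linarith
  -- bound on η
  obtain ⟨N0, hN0⟩ := hcpt.exists_bound_of_continuousOn hηc
  set N : ℝ := max N0 0 with hN_def
  have hN : 0 ≤ N := le_max_right _ _
  have hηbd : ∀ t ∈ Set.Icc (0:ℝ) T, ‖η t‖ ≤ N :=
    fun t ht => (hN0 t ht).trans (le_max_left _ _)
  -- continuity of matrix entries
  have hentry : ∀ i j, ContinuousOn (fun t => σm t i j) (Set.Icc (0:ℝ) T) := by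
    intro i j
    exact ((continuous_apply j).comp (continuous_apply i)).comp_continuousOn hσc
  -- bound on sum of squares of entries of σ
  have hWc : ContinuousOn (fun t => ∑ i, ∑ j, (σm t i j) ^ 2) (Set.Icc (0:ℝ) T) := by
    apply continuousOn_finset_sum
    intro i _
    apply continuousOn_finset_sum
    intro j _
    exact (hentry i j).pow 2
  obtain ⟨W0, hW0⟩ := hcpt.exists_bound_of_continuousOn hWc
  set W : ℝ := max W0 1 with hW_def
  have hW1 : (1:ℝ) ≤ W := le_max_right _ _
  have hW : 0 ≤ W := by linarith
  have hWbd : ∀ t ∈ Set.Icc (0:ℝ) T, ∑ i, ∑ j, (σm t i j) ^ 2 ≤ W := by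
    intro t ht
    have := hW0 t ht
    rw [Real.norm_eq_abs] at this
    exact (le_abs_self _).trans (this.trans (le_max_left _ _))
  -- continuity of the inverse matrix, via adjugate / determinant
  have hdetc : ContinuousOn (fun t => (σm t).det) (Set.Icc (0:ℝ) T) :=
    (continuous_id.matrix_det).comp_continuousOn hσc
  have hdetne : ∀ t ∈ Set.Icc (0:ℝ) T, (σm t).det ≠ 0 :=
    fun t ht => (hσinv t ht).ne_zero
  have hadjc : ContinuousOn (fun t => (σm t).adjugate) (Set.Icc (0:ℝ) T) :=
    (continuous_id.matrix_adjugate).comp_continuousOn hσc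
  have hinv_eq : ∀ t ∈ Set.Icc (0:ℝ) T,
      (σm t)⁻¹ = (σm t).det⁻¹ • (σm t).adjugate := by
    intro t ht
    rw [Matrix.inv_def, Ring.inverse_eq_inv']
  have hginvc : ContinuousOn (fun t => (σm t).det⁻¹ • (σm t).adjugate)
      (Set.Icc (0:ℝ) T) := (hdetc.inv₀ hdetne).smul hadjc
  -- continuity and bound of the value at λ = 0
  have hRc : ContinuousOn
      (fun t => ∑ i, (((σm t).det⁻¹ • (σm t).adjugate).mulVec (η t)) i ^ 2)
      (Set.Icc (0:ℝ) T) := by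
    apply continuousOn_finset_sum
    intro i _
    apply ContinuousOn.pow
    have : ContinuousOn (fun t =>
        ∑ j, ((σm t).det⁻¹ • (σm t).adjugate) i j * η t j) (Set.Icc (0:ℝ) T) := by
      apply continuousOn_finset_sum
      intro j _
      exact (((continuous_apply j).comp (continuous_apply i)).comp_continuousOn
        hginvc).mul (((continuous_apply j)).comp_continuousOn hηc)
    exact this
  obtain ⟨R0, hR0⟩ := hcpt.exists_bound_of_continuousOn hRc
  set R : ℝ := max R0 0 with hR_def
  have hR : 0 ≤ R := le_max_right _ _
  have hRbd : ∀ t ∈ Set.Icc (0:ℝ) T,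
      ∑ i, ((σm t)⁻¹.mulVec (η t)) i ^ 2 ≤ R := by
    intro t ht
    rw [hinv_eq t ht]
    have := hR0 t ht
    rw [Real.norm_eq_abs] at this
    exact (le_abs_self _).trans (this.trans (le_max_left _ _))
  -- final constant
  refine ⟨2 * W * (c * B) + Real.sqrt (2 * W * R + 2 * N ^ 2), ?_⟩
  intro t ht
  set lam : Fin d → ℝ := ls t with hlam_def
  set x : ℝ := ‖lam‖ with hx_def
  have hx : 0 ≤ x := norm_nonneg _
  set Q : ℝ := ∑ i, ((σm t)⁻¹.mulVec (η t + lam)) i ^ 2 with hQ_def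
  have hQ0 : 0 ≤ Q := Finset.sum_nonneg fun i _ => sq_nonneg _
  -- evaluate the minimality at l = 0
  have hs0 : suppFn K (0 : Fin d → ℝ) = 0 := by
    have : ∀ y : Fin d → ℝ, dotp y (0 : Fin d → ℝ) = 0 := by
      intro y; simp [dotp]
    simp only [suppFn, this, neg_zero, EReal.coe_zero]
    exact biSup_const ⟨y0, hy0K⟩
  have hkey := hmin t ht 0
  rw [hs0, mul_zero, zero_add, add_zero] at hkey
  -- the support function value at ls t is a real number
  have hlow : ((-(dotp y0 lam) : ℝ) : EReal) ≤ suppFn K lam :=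
    le_biSup (fun y => ((-(dotp y lam) : ℝ) : EReal)) hy0K
  have hne_bot : suppFn K lam ≠ ⊥ :=
    ((EReal.bot_lt_coe _).trans_le hlow).ne'
  have hne_top : suppFn K lam ≠ ⊤ := by
    intro h
    rw [h, EReal.coe_mul_top_of_pos hc, EReal.top_add_coe] at hkey
    exact (EReal.coe_lt_top _).not_ge hkey
  set s : ℝ := (suppFn K lam).toReal with hs_def
  have hscoe : ((s : ℝ) : EReal) = suppFn K lam := EReal.coe_toReal hne_top hne_bot
  -- turn the key inequality into a real one
  have hreal : c * s + Q ≤ ∑ i, ((σm t)⁻¹.mulVec (η t)) i ^ 2 := by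
    have : ((c * s + Q : ℝ) : EReal) ≤
        ((∑ i, ((σm t)⁻¹.mulVec (η t)) i ^ 2 : ℝ) : EReal) := by
      rw [EReal.coe_add, EReal.coe_mul, hscoe]
      exact hkey
    exact EReal.coe_le_coe_iff.1 this
  have hslow : -(dotp y0 lam) ≤ s := by
    rw [← hscoe] at hlow
    exact EReal.coe_le_coe_iff.1 hlow
  -- bound the linear term
  have hdot : dotp y0 lam ≤ B * x := by
    rw [hB_def, Finset.sum_mul]
    apply Finset.sum_le_sum
    intro i _
    calc y0 i * lam i ≤ |y0 i * lam i| := le_abs_self _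
      _ = |y0 i| * |lam i| := abs_mul _ _
      _ ≤ |y0 i| * x := by
          apply mul_le_mul_of_nonneg_left _ (abs_nonneg _)
          simpa [Real.norm_eq_abs] using norm_le_pi_norm lam i
  have hQle : Q ≤ R + c * (B * x) := by
    have h1 : ∑ i, ((σm t)⁻¹.mulVec (η t)) i ^ 2 ≤ R := hRbd t ht
    have h2 : -(c * (B * x)) ≤ c * s := by
      have : -(B * x) ≤ s := le_trans (neg_le_neg hdot) hslow
      calc -(c * (B * x)) = c * (-(B * x)) := by ring
        _ ≤ c * s := mul_le_mul_of_nonneg_left this hc.le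
    linarith
  -- quadratic lower bound on Q: x² ≤ 2WQ + 2N²
  set u : Fin d → ℝ := (σm t)⁻¹.mulVec (η t + lam) with hu_def
  have hv : η t + lam = (σm t).mulVec u := by
    rw [hu_def, Matrix.mulVec_mulVec, Matrix.mul_nonsing_inv _ (hσinv t ht),
      Matrix.one_mulVec]
  have hxsq : x ^ 2 ≤ 2 * W * Q + 2 * N ^ 2 := by
    have hybd : 0 ≤ 2 * W * Q + 2 * N ^ 2 := by positivity
    have hxle : x ≤ Real.sqrt (2 * W * Q + 2 * N ^ 2) := by
      rw [hx_def]
      apply (pi_norm_le_iff_of_nonneg (Real.sqrt_nonneg _)).2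
      intro i
      rw [Real.norm_eq_abs, ← Real.sqrt_sq_eq_abs]
      apply Real.sqrt_le_sqrt
      -- (lam i)² ≤ 2 (η t + lam) i² + 2 (η t i)² ≤ 2WQ + 2N²
      have hQu : Q = ∑ j, u j ^ 2 := rfl
      have hvi : ((η t + lam) i) ^ 2 ≤ W * Q := by
        have hmv : (η t + lam) i = ∑ j, σm t i j * u j := by
          rw [hv]; rfl
        have h1 : ((η t + lam) i) ^ 2 ≤ (∑ j, (σm t i j) ^ 2) * Q := by
          rw [hmv, hQu]
          exact Finset.sum_mul_sq_le_sq_mul_sq Finset.univ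
            (fun j => σm t i j) (fun j => u j)
        have h2 : (∑ j, (σm t i j) ^ 2) ≤ W := by
          refine le_trans ?_ (hWbd t ht)
          exact Finset.single_le_sum
            (f := fun k => ∑ j, (σm t k j) ^ 2)
            (fun k _ => Finset.sum_nonneg fun j _ => sq_nonneg _)
            (Finset.mem_univ i)
        exact h1.trans (mul_le_mul_of_nonneg_right h2 hQ0)
      have hηi : (η t i) ^ 2 ≤ N ^ 2 := by
        have h1 : |η t i| ≤ N := by
          refine le_trans ?_ (hηbd t ht)
          simpa [Real.norm_eq_abs] using norm_le_pi_norm (η t) i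
        calc (η t i) ^ 2 = |η t i| ^ 2 := (sq_abs _).symm
          _ ≤ N ^ 2 := by nlinarith [abs_nonneg (η t i)]
      have : lam i = (η t + lam) i - η t i := by simp
      rw [this]
      nlinarith [sq_nonneg ((η t + lam) i + η t i)]
    have := pow_le_pow_left₀ hx hxle 2
    rwa [Real.sq_sqrt hybd] at this
  -- combine: x² ≤ 2W(R + cBx) + 2N²
  have hfinal : x ^ 2 ≤ (2 * W * (c * B)) * x + (2 * W * R + 2 * N ^ 2) := by
    have h1 : 2 * W * Q ≤ 2 * W * (R + c * (B * x)) :=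
      mul_le_mul_of_nonneg_left hQle (by linarith)
    linarith
  exact quad_root_bound hx (by positivity) (by positivity) hfinal
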